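/- Let n, p be natural numbers and let f, a : Fin n → ℕ with a i ≤ f i for every i (a i counts the active agents among the f i agents at node i). Assume: (1) the total number of inactive agents satisfies ∑_{i} (f i − a i) ≤ p; (2) every node satisfies f i ≤ p+1; (3) the total number of agents satisfies ∑_{i} f i ≥ (n−2)·(p+1)+1; and (4) there exists a hole, i.e. some i₀ with f i₀ = 0. Then the number of nodes occupied exclusively by inactive agents is at most one: the cardinality of {i : Fin n | 1 ≤ f i ∧ a i = 0} is at most 1. -/
import Mathlib


/-- If at most `p` agents are inactive in total, every node holds at most
`p+1` agents, the total is at least `(n-2)(p+1)+1`, and a hole exists, then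
at most one node is occupied exclusively by inactive agents. -/
theorem at_most_one_inactive_node (n p : ℕ) (f a : Fin n → ℕ)
    (hle : ∀ i, a i ≤ f i)
    (hinact : ∑ i, (f i - a i) ≤ p)
    (hbound : ∀ i, f i ≤ p + 1)
    (hsum : (n - 2) * (p + 1) + 1 ≤ ∑ i, f i)
    (hhole : ∃ i₀ : Fin n, f i₀ = 0) :
    (Finset.univ.filter fun i : Fin n => 1 ≤ f i ∧ a i = 0).card ≤ 1 := by
  by_contra h
  push_neg at h
  obtain ⟨i, hi, j, hj, hij⟩ := Finset.one_lt_card.mp h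
  obtain ⟨i₀, h0⟩ := hhole
  simp only [Finset.mem_filter, Finset.mem_univ, true_and] at hi hj
  have h0i : i₀ ≠ i := by rintro rfl; omega
  have h0j : i₀ ≠ j := by rintro rfl; omega
  -- f i + f j ≤ p
  have key : f i + f j ≤ p := by
    have h1 : ∑ k ∈ ({i, j} : Finset (Fin n)), (f k - a k) ≤ ∑ k : Fin n, (f k - a k) :=
      Finset.sum_le_sum_of_subset (f := fun k => f k - a k)
      (Finset.subset_univ ({i, j} : Finset (Fin n)))
    rw [Finset.sum_pair hij, hi.2, hj.2, Nat.sub_zero, Nat.sub_zero] at h1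
    omega
  set t : Finset (Fin n) := {i₀, i, j} with ht
  have hct : t.card = 3 := by
    rw [ht, Finset.card_insert_of_notMem (by simp [h0i, h0j]),
      Finset.card_pair hij]
  have hsplit : ∑ k ∈ (Finset.univ \ t), f k + ∑ k ∈ t, f k = ∑ k, f k :=
    Finset.sum_sdiff (Finset.subset_univ t)
  have htsum : ∑ k ∈ t, f k = f i + f j := by
    rw [ht, Finset.sum_insert (by simp [h0i, h0j]), Finset.sum_pair hij, h0]; omega
  have hrest : ∑ k ∈ (Finset.univ \ t), f k ≤ (n - 3) * (p + 1) := by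
    have := Finset.sum_le_card_nsmul (Finset.univ \ t) f (p + 1)
      (fun k _ => hbound k)
    have hc : (Finset.univ \ t).card = n - 3 := by
      rw [Finset.card_sdiff_of_subset (Finset.subset_univ t), hct, Finset.card_univ,
        Fintype.card_fin]
    rw [hc] at this
    simpa [smul_eq_mul, Nat.mul_comm] using this
  have hn3 : 3 ≤ n := by
    have := Finset.card_le_card (Finset.subset_univ t)
    rw [hct, Finset.card_univ, Fintype.card_fin] at this
    exact this
  have hexp : (n - 2) * (p + 1) = (n - 3) * (p + 1) + (p + 1) := by
    have : n - 2 = (n - 3) + 1 := by omega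
    rw [this]; ring
  omega
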